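/- Uniqueness of highest weight element in type C: if x = (x₁,…,x_k,0,…) ∈ R(λ) (characterized by conditions (1)-(4) of the C_n characterization theorem) satisfies ẽ_l x = 0 for all l ∈ I, then x = r_λ. -/

import Mathlib

attribute [local instance] Classical.propDecidable

noncomputable section

namespace CrystalSeq

/-- an element of `𝓡^∞`: the (finite) list of its non-zero components, each component
recorded together with its superscript `i` (so `(i, L)` stands for an element of `⋃ₛ R^i_s`). -/
abbrev RSeq := List (ℤ × List (ℤ × ℤ))

def firsts (L : List (ℤ × ℤ)) : List ℤ := L.map Prod.fst
def seconds (L : List (ℤ × ℤ)) : List ℤ := L.map Prod.snd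

/-- `L ∈ ⋃ₛ R^i_s`.  Entries are encoded as integers: `v` with `1 ≤ v ≤ n` is the letter `v`,
and (in type `C`) `v` with `n < v ≤ 2n-1` is the barred letter `bar (2n - v)`, so that the
bar map is `v ↦ 2n - v` and `max I = 2n - 1`.  The flag is `t = true` for type `Cₙ` and
`t = false` for type `Aₙ` (where `max I = n` and there are no barred letters).
The conditions are `1 ≤ i_s < ⋯ < i₁ ≤ i ≤ i₁' < ⋯ < i_s' ≤ max I` and `i_j' ≤ bar i_j`. -/
def InR (t : Bool) (n : ℕ) (i : ℤ) (L : List (ℤ × ℤ)) : Prop :=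
  List.Chain' (fun p q => q.1 < p.1 ∧ p.2 < q.2) L ∧
  ∀ p ∈ L, 1 ≤ p.1 ∧ p.1 ≤ i ∧ i ≤ p.2 ∧
    p.2 ≤ (if t then 2 * (n : ℤ) - 1 else (n : ℤ)) ∧
    (t = true → p.2 ≤ 2 * (n : ℤ) - p.1)

/-- property (a) of Section 3 -/
def condA (t : Bool) (n : ℕ) (i l : ℤ) (L : List (ℤ × ℤ)) : Prop :=
  l ∉ firsts L ∧ l ∉ seconds L ∧
  (l < i → l + 1 ∈ firsts L) ∧ (i < l → l - 1 ∈ seconds L) ∧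
  (t = true → (2 * (n : ℤ) - l - 1 ∈ seconds L ∨ 2 * (n : ℤ) - l ∉ seconds L))

/-- property (a') of Section 3 (only meaningful in type `C`) -/
def condA' (t : Bool) (n : ℕ) (i l : ℤ) (L : List (ℤ × ℤ)) : Prop :=
  t = true ∧ l ∉ firsts L ∧ l ∉ seconds L ∧
  (l < i → l + 1 ∈ firsts L) ∧ (i < l → l - 1 ∈ seconds L) ∧
  (2 * (n : ℤ) - l - 1 ∈ seconds L ∧ 2 * (n : ℤ) - l ∉ seconds L)

/-- property (b) of Section 3 -/
def condB (t : Bool) (n : ℕ) (i l : ℤ) (L : List (ℤ × ℤ)) : Prop :=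
  t = true ∧ 2 * (n : ℤ) - l ∉ seconds L ∧ 2 * (n : ℤ) - l - 1 ∈ seconds L ∧
  (l < i → (l + 1 ∉ firsts L ∨ l ∈ firsts L)) ∧
  (i < l → (l - 1 ∉ seconds L ∨ l ∈ seconds L)) ∧
  (l = i → ∃ p, L.head? = some p ∧ (p.1 = l ∨ p.2 = l))

/-- property (c) of Section 3 -/
def condC (t : Bool) (n : ℕ) (i l : ℤ) (L : List (ℤ × ℤ)) : Prop :=
  (l ∈ firsts L ∨ l ∈ seconds L) ∧
  (l < i → l + 1 ∉ firsts L) ∧ (i < l → l - 1 ∉ seconds L) ∧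
  (l = i → L.head? = some (l, l)) ∧
  (t = true → (2 * (n : ℤ) - l - 1 ∈ seconds L ∨ 2 * (n : ℤ) - l ∉ seconds L))

/-- property (d) of Section 3 (only meaningful in type `C`) -/
def condD (t : Bool) (n : ℕ) (i l : ℤ) (L : List (ℤ × ℤ)) : Prop :=
  t = true ∧ 2 * (n : ℤ) - l ∈ seconds L ∧ 2 * (n : ℤ) - l - 1 ∉ seconds L ∧
  (l < i → (l + 1 ∉ firsts L ∨ l ∈ firsts L)) ∧
  (i < l → (l - 1 ∉ seconds L ∨ l ∈ seconds L)) ∧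
  (l = i → ∃ p, L.head? = some p ∧ (p.1 = l ∨ p.2 = l))

/-- property (d') of Section 3: (d) with every `∨` replaced by `∧` -/
def condD' (t : Bool) (n : ℕ) (i l : ℤ) (L : List (ℤ × ℤ)) : Prop :=
  t = true ∧ 2 * (n : ℤ) - l ∈ seconds L ∧ 2 * (n : ℤ) - l - 1 ∉ seconds L ∧
  (l < i → (l + 1 ∉ firsts L ∧ l ∈ firsts L)) ∧
  (i < l → (l - 1 ∉ seconds L ∧ l ∈ seconds L)) ∧
  (l = i → ∃ p, L.head? = some p ∧ p.1 = l ∧ p.2 = l)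

/-- the raw modification underlying `θ_l` in case (a): replace `l+1` by `l` (if `l < i`),
replace `l-1` by `l` (if `l > i`), or add the pair `(l,l)` (if `l = i`). -/
def thetaRaw (i l : ℤ) (L : List (ℤ × ℤ)) : List (ℤ × ℤ) :=
  if l < i then L.map (fun p => if p.1 = l + 1 then (l, p.2) else p)
  else if i < l then L.map (fun p => if p.2 = l - 1 then (p.1, l) else p)
  else (l, l) :: L

/-- replace `bar (l+1)` by `bar l` (case (b) of `θ_l`) -/
def barUp (n : ℕ) (l : ℤ) (L : List (ℤ × ℤ)) : List (ℤ × ℤ) :=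
  L.map (fun p => if p.2 = 2 * (n : ℤ) - l - 1 then (p.1, 2 * (n : ℤ) - l) else p)

/-- the map `θ_l : ⋃ₛ R^i_s → ⋃ₛ R^i_s ∪ {0}` -/
def theta (t : Bool) (n : ℕ) (i l : ℤ) (L : List (ℤ × ℤ)) : Option (List (ℤ × ℤ)) :=
  if condA t n i l L then some (thetaRaw i l L)
  else if condB t n i l L then some (barUp n l L)
  else none

/-- the raw modification underlying `ρ_l` in case (c): replace `l` by `l+1` (if `l < i`),
replace `l` by `l-1` (if `l > i`), or erase the pair `(l,l)` (if `l = i`). -/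
def rhoRaw (i l : ℤ) (L : List (ℤ × ℤ)) : List (ℤ × ℤ) :=
  if l < i then L.map (fun p => if p.1 = l then (l + 1, p.2) else p)
  else if i < l then L.map (fun p => if p.2 = l then (p.1, l - 1) else p)
  else L.erase (l, l)

/-- replace `bar l` by `bar (l+1)` (case (d) of `ρ_l`) -/
def barDown (n : ℕ) (l : ℤ) (L : List (ℤ × ℤ)) : List (ℤ × ℤ) :=
  L.map (fun p => if p.2 = 2 * (n : ℤ) - l then (p.1, 2 * (n : ℤ) - l - 1) else p)

/-- the map `ρ_l : ⋃ₛ R^i_s → ⋃ₛ R^i_s ∪ {0}` -/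
def rho (t : Bool) (n : ℕ) (i l : ℤ) (L : List (ℤ × ℤ)) : Option (List (ℤ × ℤ)) :=
  if condC t n i l L then some (rhoRaw i l L)
  else if condD t n i l L then some (barDown n l L)
  else none

/-- validity of an element of `𝓡^∞` -/
def ValidR (t : Bool) (n : ℕ) (c : RSeq) : Prop :=
  ∀ q ∈ c, 1 ≤ q.1 ∧ q.1 ≤ (n : ℤ) ∧ InR t n q.1 q.2

/-- `σ^j_l = a^j_l + b^j_l` -/
def sigmaStat (t : Bool) (n : ℕ) (l : ℤ) (c : RSeq) (j : ℕ) : ℕ :=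
  (c.take (j - 1)).countP (fun q => decide (condA t n q.1 l q.2 ∨ condB t n q.1 l q.2)) +
  (c.take (j - 1)).countP (fun q => decide (condA' t n q.1 l q.2))

/-- `τ^j_l = c^j_l + d^j_l` -/
def tauStat (t : Bool) (n : ℕ) (l : ℤ) (c : RSeq) (j : ℕ) : ℕ :=
  ((c.take j).drop 1).countP (fun q => decide (condC t n q.1 l q.2 ∨ condD t n q.1 l q.2)) +
  ((c.take j).drop 1).countP (fun q => decide (condD' t n q.1 l q.2))

/-- `σ^j_l - τ^j_l` -/
def dstat (t : Bool) (n : ℕ) (l : ℤ) (c : RSeq) (j : ℕ) : ℤ :=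
  (sigmaStat t n l c j : ℤ) - (tauStat t n l c j : ℤ)

/-- `min {σ^j_l - τ^j_l | 1 ≤ j ≤ k}` -/
def minStat (t : Bool) (n : ℕ) (l : ℤ) (c : RSeq) : ℤ :=
  ((List.range c.length).map (fun j => dstat t n l c (j + 1))).foldr min (dstat t n l c 1)

/-- `f_l(x)`: the largest position attaining the minimum of `σ^j_l - τ^j_l` -/
def fpos (t : Bool) (n : ℕ) (l : ℤ) (c : RSeq) : ℕ :=
  sSup {p : ℕ | 1 ≤ p ∧ p ≤ c.length ∧ dstat t n l c p = minStat t n l c}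

/-- `e_l(x)`: the smallest position attaining the minimum of `σ^j_l - τ^j_l` -/
def epos (t : Bool) (n : ℕ) (l : ℤ) (c : RSeq) : ℕ :=
  sInf {p : ℕ | 1 ≤ p ∧ p ≤ c.length ∧ dstat t n l c p = minStat t n l c}

/-- the Kashiwara operator `f̃_l` on `𝓡^∞`: apply `θ_l` at position `f_l(x)` -/
def ftil (t : Bool) (n : ℕ) (l : ℤ) (c : RSeq) : Option RSeq :=
  (getElem? c (fpos t n l c - 1)).bind
    (fun q => (theta t n q.1 l q.2).map (fun y => c.set (fpos t n l c - 1) (q.1, y)))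

/-- the Kashiwara operator `ẽ_l` on `𝓡^∞`: apply `ρ_l` at position `e_l(x)` -/
def etil (t : Bool) (n : ℕ) (l : ℤ) (c : RSeq) : Option RSeq :=
  (getElem? c (epos t n l c - 1)).bind
    (fun q => (rho t n q.1 l q.2).map (fun y => c.set (epos t n l c - 1) (q.1, y)))

/-- the Cartan matrix entry `⟨α_a^∨, α_b⟩` of type `Aₙ` (`t = false`) or `Cₙ` (`t = true`) -/
def cartan (t : Bool) (n : ℕ) (a b : ℤ) : ℤ :=
  if a = b then 2
  else if b = a + 1 then (if t = true ∧ b = (n : ℤ) then -2 else -1)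
  else if b = a - 1 then -1 else 0

/-- the coefficient of `ω_m` in the positive root `α_{a,b}` (here `b > n` encodes the
barred letter `bar (2n - b)`, so `α_{a, bar j} = α_a + ⋯ + α_n + α_{n-1} + ⋯ + α_j`). -/
def rootCoeff (t : Bool) (n : ℕ) (a b m : ℤ) : ℤ :=
  (∑ x ∈ Finset.Icc a (min b (n : ℤ)), cartan t n m x) +
  (if (n : ℤ) < b then ∑ x ∈ Finset.Icc (2 * (n : ℤ) - b) ((n : ℤ) - 1), cartan t n m x else 0)

/-- the coefficient of `ω_m` in the weight of a component `(i, L)`: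
`ω_i - ∑_j α_{i_j, i_j'}` -/
def wtComp (t : Bool) (n : ℕ) (q : ℤ × List (ℤ × ℤ)) (m : ℤ) : ℤ :=
  (if m = q.1 then 1 else 0) - ((q.2.map (fun p => rootCoeff t n p.1 p.2 m)).sum)

/-- the coefficient of `ω_m` in `wt(x)` for `x ∈ 𝓡^∞` -/
def wtR (t : Bool) (n : ℕ) (c : RSeq) (m : ℤ) : ℤ :=
  (c.map (fun q => wtComp t n q m)).sum

/-- `ε_l(x) = τ²_l((∅₁, x_{q₁}, 0, …)) - min_j (σ^j_l - τ^j_l)` -/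
def epsStat (t : Bool) (n : ℕ) (l : ℤ) (c : RSeq) : ℤ :=
  (tauStat t n l (((1 : ℤ), ([] : List (ℤ × ℤ))) :: c) 2 : ℤ) - minStat t n l c

/-- `φ_l(x) = σ^{k+1}_l(x) - τ^k_l(x) - min_j (σ^j_l - τ^j_l)` -/
def phiStat (t : Bool) (n : ℕ) (l : ℤ) (c : RSeq) : ℤ :=
  (sigmaStat t n l c (c.length + 1) : ℤ) - (tauStat t n l c c.length : ℤ) - minStat t n l c

/-- iterates of `ẽ_l` -/
def eIter (t : Bool) (n : ℕ) (l : ℤ) (k : ℕ) (c : RSeq) : Option RSeq :=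
  (fun o => o.bind (etil t n l))^[k] (some c)

/-- iterates of `f̃_l` -/
def fIter (t : Bool) (n : ℕ) (l : ℤ) (k : ℕ) (c : RSeq) : Option RSeq :=
  (fun o => o.bind (ftil t n l))^[k] (some c)

/-- one Kashiwara step (in either direction); connected components of `𝓡^∞` are the
equivalence classes of the reflexive-transitive closure of this relation. -/
def KStep (t : Bool) (n : ℕ) (c c' : RSeq) : Prop :=
  ∃ l : ℤ, 1 ≤ l ∧ l ≤ (n : ℤ) ∧ (ftil t n l c = some c' ∨ etil t n l c = some c')

/-- the list `1^{m_1} 2^{m_2} ⋯ n^{m_n}` of superscripts of `r_λ` for `λ = ∑ m_i ω_i` -/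
def typeList (n : ℕ) (m : ℤ → ℕ) : List ℤ :=
  (List.range n).flatMap (fun a => List.replicate (m ((a : ℤ) + 1)) ((a : ℤ) + 1))

/-- the highest weight element `r_λ = (∅₁^{m₁}, …, ∅ₙ^{mₙ}, 0, …)` -/
def rlam (n : ℕ) (m : ℤ → ℕ) : RSeq := (typeList n m).map (fun i => (i, []))

/-- `𝓡(λ)`: the connected component of `𝓡^∞` containing `r_λ` -/
def Rlam (t : Bool) (n : ℕ) (m : ℤ → ℕ) (c : RSeq) : Prop :=
  Relation.ReflTransGen (KStep t n) (rlam n m) c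

/-- the `k`-th first entry `i_k` (1-based), as an `Option` -/
def fIdx (L : List (ℤ × ℤ)) (k : ℤ) : Option ℤ :=
  if 1 ≤ k then (L[k.toNat - 1]?).map Prod.fst else none

/-- the `k`-th second entry `i'_k` (1-based), as an `Option` -/
def sIdx (L : List (ℤ × ℤ)) (k : ℤ) : Option ℤ :=
  if 1 ≤ k then (L[k.toNat - 1]?).map Prod.snd else none

/-- conditions (1) i)–iii) on an adjacent pair `(x_q, x_{q+1})`,
`x_q = (i₁,i₁')⋯(i_s,i_s') ∈ R^i_s`, `x_{q+1} = (j₁,j₁')⋯(j_t,j_t') ∈ R^j_t`. -/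
def cond1 (i : ℤ) (L1 : List (ℤ × ℤ)) (j : ℤ) (L2 : List (ℤ × ℤ)) : Prop :=
  -- i) `#{i_k | 1 ≤ i_k ≤ j_{t-p}} ≥ p+1` for `0 ≤ p ≤ u = max{0 ≤ r ≤ t-1 | j_{t-r} ≤ i}`
  (∀ p : ℕ, (p : ℤ) ≤ (L2.length : ℤ) - 1 →
    ∀ jv, fIdx L2 ((L2.length : ℤ) - p) = some jv → jv ≤ i →
      ((p : ℤ) + 1 ≤ (L1.countP (fun q => decide (1 ≤ q.1 ∧ q.1 ≤ jv)) : ℤ))) ∧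
  -- ii) `j_{t-p} ≤ i'_{j_{t-p} - p + s - i}` for `p ∈ {u+1 ≤ r ≤ t-1 | j_{t-r} ≤ r + i}`
  (∀ p : ℕ, (p : ℤ) ≤ (L2.length : ℤ) - 1 →
    ∀ jv, fIdx L2 ((L2.length : ℤ) - p) = some jv → i < jv → jv ≤ (p : ℤ) + i →
      ∃ v, sIdx L1 (jv - p + L1.length - i) = some v ∧ jv ≤ v) ∧
  -- iii) `j'_p ≤ i'_{j - i + s - t + p}` for `1 ≤ p ≤ i - j + t`
  (∀ p : ℕ, 1 ≤ p → (p : ℤ) ≤ i - j + L2.length →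
    ∀ jv, sIdx L2 p = some jv →
      ∃ v, sIdx L1 (j - i + L1.length - L2.length + p) = some v ∧ jv ≤ v)

/-- condition (2): there is no pair `(∅_i, x_{q+1} ≠ ∅_j)` with `i ≥ j_t` -/
def cond2 (i : ℤ) (L1 : List (ℤ × ℤ)) (L2 : List (ℤ × ℤ)) : Prop :=
  L1 = [] → ∀ p, L2.getLast? = some p → i < p.1

/-- an adjacent pair satisfying the type `A` conditions (1) and (2) -/
def pairOkA (i : ℤ) (L1 : List (ℤ × ℤ)) (j : ℤ) (L2 : List (ℤ × ℤ)) : Prop :=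
  (L1 ≠ [] → L2 ≠ [] → cond1 i L1 j L2) ∧ cond2 i L1 L2

/-- the exclusion condition `bar v - δ ∉ (1-δ)·{firsts} ∪ δ·(I ∖ {seconds})`
of conditions (3)(a),(b) and (4)(a),(b), where `δ = δ_{bar v ∈ {i+1,…,n}}`. -/
def excl (n : ℕ) (i : ℤ) (L : List (ℤ × ℤ)) (v : ℤ) : Prop :=
  ((i < 2 * (n : ℤ) - v ∧ 2 * (n : ℤ) - v ≤ (n : ℤ)) →
    ((1 ≤ 2 * (n : ℤ) - v - 1 ∧ 2 * (n : ℤ) - v - 1 ≤ 2 * (n : ℤ) - 1) →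
      2 * (n : ℤ) - v - 1 ∈ seconds L)) ∧
  (¬(i < 2 * (n : ℤ) - v ∧ 2 * (n : ℤ) - v ≤ (n : ℤ)) → 2 * (n : ℤ) - v ∉ firsts L)

/-- the forbidden configuration of condition (3) of Theorem `char2` -/
def cond3 (n : ℕ) (i : ℤ) (L1 : List (ℤ × ℤ)) (j : ℤ) (L2 : List (ℤ × ℤ)) : Prop :=
  ∃ p r : ℕ, 1 ≤ r ∧ r ≤ p ∧ p ≤ L1.length ∧
    ∃ vp vr : ℤ, sIdx L1 (p : ℤ) = some vp ∧ sIdx L1 (r : ℤ) = some vr ∧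
      (n : ℤ) ≤ vr ∧ vr ≤ vp ∧
      excl n i L1 vr ∧ excl n j L2 vp ∧
      ((p : ℤ) - (r : ℤ)
        + (L2.countP (fun q => decide (q.1 < 2 * (n : ℤ) - vp)) : ℤ)
        - (L1.countP (fun q => decide (q.1 < 2 * (n : ℤ) - vr)) : ℤ)
        + (L1.countP (fun q => decide (q.2 < 2 * (n : ℤ) - vr)) : ℤ)
        - (L2.countP (fun q => decide (q.2 < 2 * (n : ℤ) - vp)) : ℤ)
        ≥ max 0 (2 * (n : ℤ) - vr - i) - max 0 (2 * (n : ℤ) - vp - j))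

/-- the forbidden configuration of condition (4) of Theorem `char2` -/
def cond4 (n : ℕ) (i : ℤ) (L1 : List (ℤ × ℤ)) (j : ℤ) (L2 : List (ℤ × ℤ)) : Prop :=
  ∃ p r : ℕ, 1 ≤ p ∧ p ≤ L1.length ∧ 1 ≤ r ∧ r ≤ L2.length ∧
    ∃ vp vr : ℤ, sIdx L1 (p : ℤ) = some vp ∧ sIdx L2 (r : ℤ) = some vr ∧
      (n : ℤ) ≤ vr ∧ vr ≤ vp ∧
      excl n j L2 vp ∧ excl n j L2 vr ∧
      ((i - j) + ((L2.length : ℤ) - (L1.length : ℤ)) + ((p : ℤ) - (r : ℤ))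
        + (L2.countP (fun q => decide (2 * (n : ℤ) - vp ≤ q.2 ∧ q.2 < 2 * (n : ℤ) - vr)) : ℤ)
        - (L2.countP (fun q => decide (2 * (n : ℤ) - vp ≤ q.1 ∧ q.1 < 2 * (n : ℤ) - vr)) : ℤ)
        ≥ max 0 (2 * (n : ℤ) - vr - j) - max 0 (2 * (n : ℤ) - vp - j))

/-- an adjacent pair satisfying the type `C` conditions (1)–(4) -/
def pairOkC (n : ℕ) (i : ℤ) (L1 : List (ℤ × ℤ)) (j : ℤ) (L2 : List (ℤ × ℤ)) : Prop :=
  pairOkA i L1 j L2 ∧ (L1 ≠ [] → ¬ cond3 n i L1 j L2) ∧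
  (L1 ≠ [] → L2 ≠ [] → ¬ cond4 n i L1 j L2)

/-- the explicit description of `𝓡(λ)` in type `Aₙ` (Theorem `char`) -/
def MemA (n : ℕ) (m : ℤ → ℕ) (c : RSeq) : Prop :=
  c.map Prod.fst = typeList n m ∧ ValidR false n c ∧
  List.Chain' (fun a b => pairOkA a.1 a.2 b.1 b.2) c

/-- the explicit description of `𝓡(λ)` in type `Cₙ` (Theorem `char2`) -/
def MemC (n : ℕ) (m : ℤ → ℕ) (c : RSeq) : Prop :=
  c.map Prod.fst = typeList n m ∧ ValidR true n c ∧
  List.Chain' (fun a b => pairOkC n a.1 a.2 b.1 b.2) c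

/-- `f̃_l` on a single component -/
def fC (t : Bool) (n : ℕ) (l : ℤ) (q : ℤ × List (ℤ × ℤ)) : Option (ℤ × List (ℤ × ℤ)) :=
  (theta t n q.1 l q.2).map (fun y => (q.1, y))

/-- `ẽ_l` on a single component -/
def eC (t : Bool) (n : ℕ) (l : ℤ) (q : ℤ × List (ℤ × ℤ)) : Option (ℤ × List (ℤ × ℤ)) :=
  (rho t n q.1 l q.2).map (fun y => (q.1, y))

/-- `f̃_l` on a tensor product `𝓡' ⊗ (single component)` (tensor product rule) -/
def tensF (t : Bool) (n : ℕ) (l : ℤ) (b : RSeq × (ℤ × List (ℤ × ℤ))) :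
    Option (RSeq × (ℤ × List (ℤ × ℤ))) :=
  if epsStat t n l [b.2] < phiStat t n l b.1 then (ftil t n l b.1).map (fun y => (y, b.2))
  else (fC t n l b.2).map (fun y => (b.1, y))

/-- `ẽ_l` on a tensor product `𝓡' ⊗ (single component)` (tensor product rule) -/
def tensE (t : Bool) (n : ℕ) (l : ℤ) (b : RSeq × (ℤ × List (ℤ × ℤ))) :
    Option (RSeq × (ℤ × List (ℤ × ℤ))) :=
  if epsStat t n l [b.2] ≤ phiStat t n l b.1 then (etil t n l b.1).map (fun y => (y, b.2))
  else (eC t n l b.2).map (fun y => (b.1, y))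

/-- `φ_l` of the tensor product -/
def tensPhi (t : Bool) (n : ℕ) (l : ℤ) (b : RSeq × (ℤ × List (ℤ × ℤ))) : ℤ :=
  max (phiStat t n l [b.2]) (phiStat t n l b.1 + phiStat t n l [b.2] - epsStat t n l [b.2])

/-- `ε_l` of the tensor product -/
def tensEps (t : Bool) (n : ℕ) (l : ℤ) (b : RSeq × (ℤ × List (ℤ × ℤ))) : ℤ :=
  max (epsStat t n l b.1) (epsStat t n l b.1 + epsStat t n l [b.2] - phiStat t n l b.1)

/-- the map `η : 𝓡(ω_i) → 𝓡(ω_{i-1}) ⊗ 𝓡(ω_1)` of Theorem 6.1 (type `Cₙ`) -/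
def eta (i : ℤ) (L : List (ℤ × ℤ)) : List (ℤ × ℤ) × List (ℤ × ℤ) :=
  match L with
  | [] => ([], [(1, i - 1)])
  | (a, b) :: rest =>
      ((if a = i then [] else [(a, i - 1)]) ++ (rest.map Prod.fst).zip (b :: rest.map Prod.snd),
       [(1, (rest.getLastD (a, b)).2)])

/-- `η` viewed as landing in the tensor product of crystals of tuples -/
def etaT (i : ℤ) (L : List (ℤ × ℤ)) : RSeq × (ℤ × List (ℤ × ℤ)) :=
  ([(i - 1, (eta i L).1)], (1, (eta i L).2))

end CrystalSeq

/-! If `x ≠ r_λ`, let `x_p = (i, L)` be its first non-empty component. Reading `l` off the head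
pair of `L` makes `ρ_l` act on `x_p`, and `l` bounds every first entry of `L`, so by condition (2)
and the ordering of superscripts all earlier, empty, components have superscript `< l` and add
nothing to `σ_l`. Hence either `p = 1`, or `σ_l - τ_l` is negative at `p`; either way the
position chosen by `ẽ_l` carries a component on which `ρ_l` acts, so `ẽ_l x ≠ 0`. -/

theorem List.exists_append_cons_of_not_forall {α : Type*} {p : α → Prop} :
    ∀ {l : List α}, ¬ (∀ x ∈ l, p x) → ∃ s x t, l = s ++ x :: t ∧ (∀ y ∈ s, p y) ∧ ¬ p x
  | [], h => absurd (fun _ hx => absurd hx List.not_mem_nil) h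
  | a :: l, h => by
    by_cases ha : p a
    · obtain ⟨s, y, t, rfl, hs, hy⟩ :=
        List.exists_append_cons_of_not_forall (l := l) fun hl => h (List.forall_mem_cons.mpr ⟨ha, hl⟩)
      exact ⟨a :: s, y, t, rfl, List.forall_mem_cons.mpr ⟨ha, hs⟩, hy⟩
    · exact ⟨[], a, l, rfl, by simp, ha⟩

theorem List.foldr_min_le_of_mem {α : Type*} [LinearOrder α] {a x : α} {l : List α} (hx : x ∈ a :: l) :
    l.foldr min a ≤ x := by
  induction l with
  | nil => simp_all
  | cons b l ih =>
    simp only [List.mem_cons] at hx ih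
    rcases hx with rfl | rfl | hx
    · exact (min_le_right _ _).trans (ih (Or.inl rfl))
    · exact min_le_left _ _
    · exact (min_le_right _ _).trans (ih (Or.inr hx))

theorem List.foldr_min_mem {α : Type*} [LinearOrder α] (a : α) (l : List α) : l.foldr min a ∈ a :: l := by
  induction l with
  | nil => simp
  | cons b l ih =>
    rcases min_choice b (l.foldr min a) with h | h <;>
      simp only [List.foldr_cons, h, List.mem_cons] at ih ⊢ <;> tauto

namespace CrystalSeq

theorem InR.head_extremal {t : Bool} {n : ℕ} {i : ℤ} {a : ℤ × ℤ} {T : List (ℤ × ℤ)}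
    (h : InR t n i (a :: T)) : ∀ p ∈ a :: T, p.1 ≤ a.1 ∧ a.2 ≤ p.2 := by
  intro p hp
  rcases List.mem_cons.mp hp with rfl | hp
  · exact ⟨le_rfl, le_rfl⟩
  · let _ : Trans (fun p q : ℤ × ℤ => q.1 < p.1 ∧ p.2 < q.2)
        (fun p q : ℤ × ℤ => q.1 < p.1 ∧ p.2 < q.2) (fun p q : ℤ × ℤ => q.1 < p.1 ∧ p.2 < q.2) :=
      ⟨fun h₁ h₂ => ⟨h₂.1.trans h₁.1, h₁.2.trans h₂.2⟩⟩
    have hrel := h.1.rel_cons hp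
    exact ⟨hrel.1.le, hrel.2.le⟩

theorem condC_or_condD_of_mem {n : ℕ} {i l : ℤ} {L : List (ℤ × ℤ)}
    (hmem : l ∈ firsts L ∨ l ∈ seconds L) (hlt : l < i → l + 1 ∉ firsts L)
    (hgt : i < l → l - 1 ∉ seconds L) (heq : l = i → L.head? = some (l, l)) :
    condC true n i l L ∨ condD true n i l L := by
  by_cases hbar : 2 * (n : ℤ) - l - 1 ∈ seconds L ∨ 2 * (n : ℤ) - l ∉ seconds L
  · exact Or.inl ⟨hmem, hlt, hgt, heq, fun _ => hbar⟩
  · rw [not_or, not_not] at hbar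
    exact Or.inr ⟨rfl, hbar.2, hbar.1, fun h => Or.inl (hlt h), fun h => Or.inl (hgt h),
      fun h => ⟨(l, l), heq h, Or.inl rfl⟩⟩

/-- With `(a, b)` the head of `L`, `a` is its largest first entry and `b` its smallest second
entry; `l` is `a` if `a < i` or `a = b`, else `b` if `b ≤ n`, else `bar b`, via case (d). -/
theorem exists_condC_or_condD {n : ℕ} {i : ℤ} {L : List (ℤ × ℤ)} (hin : i ≤ n)
    (hR : InR true n i L) (hL : L ≠ []) :
    ∃ l : ℤ, 1 ≤ l ∧ l ≤ n ∧ (∀ p ∈ L, p.1 ≤ l) ∧ (condC true n i l L ∨ condD true n i l L) := by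
  obtain ⟨⟨a, b⟩, T, rfl⟩ := List.exists_cons_of_ne_nil hL
  have hext := hR.head_extremal
  have hab := hR.2 (a, b) List.mem_cons_self
  dsimp only at hab hext
  obtain ⟨ha1, hai, hib, -, hba⟩ := hab
  replace hba := hba rfl
  have hmemF : a ∈ firsts ((a, b) :: T) := by simp [firsts]
  have hmemS : b ∈ seconds ((a, b) :: T) := by simp [seconds]
  have hnotF : ∀ v, a < v → v ∉ firsts ((a, b) :: T) := fun v hv hmem => by
    obtain ⟨p, hp, rfl⟩ := List.mem_map.mp hmem
    exact absurd (hext p hp).1 (not_le.mpr hv)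
  have hnotS : ∀ v, v < b → v ∉ seconds ((a, b) :: T) := fun v hv hmem => by
    obtain ⟨p, hp, rfl⟩ := List.mem_map.mp hmem
    exact absurd (hext p hp).2 (not_le.mpr hv)
  rcases hai.lt_or_eq with hai | rfl
  · exact ⟨a, ha1, by omega, fun p hp => (hext p hp).1,
      condC_or_condD_of_mem (Or.inl hmemF) (fun _ => hnotF _ (by omega)) (by omega) (by omega)⟩
  rcases hib.lt_or_eq with hib | rfl
  · by_cases hbn : b ≤ n
    · exact ⟨b, by omega, hbn, fun p hp => (hext p hp).1.trans hib.le,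
        condC_or_condD_of_mem (Or.inr hmemS) (by omega) (fun _ => hnotS _ (by omega)) (by omega)⟩
    · refine ⟨2 * n - b, by omega, by omega, fun p hp => (hext p hp).1.trans (by omega),
        Or.inr ⟨rfl, ?_, ?_, by omega, fun _ => Or.inl (hnotS _ (by omega)),
          fun h => ⟨(a, b), rfl, Or.inl h.symm⟩⟩⟩
      · rwa [sub_sub_cancel]
      · rw [sub_sub_cancel]; exact hnotS _ (by omega)
  · exact ⟨a, ha1, hin, fun p hp => (hext p hp).1,
      condC_or_condD_of_mem (Or.inl hmemF) (by omega) (by omega) (fun _ => rfl)⟩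

section Statistics

variable {t : Bool} {n : ℕ} {l : ℤ} {c : RSeq}

theorem dstat_one : dstat t n l c 1 = 0 := by
  have hdrop : (c.take 1).drop 1 = [] := by cases c <;> simp
  simp [dstat, sigmaStat, tauStat, hdrop]

theorem minStat_le_dstat {p : ℕ} (hp1 : 1 ≤ p) (hp : p ≤ c.length) :
    minStat t n l c ≤ dstat t n l c p :=
  List.foldr_min_le_of_mem <| List.mem_cons_of_mem _ <|
    List.mem_map.mpr ⟨p - 1, List.mem_range.mpr (by omega), by congr 1; omega⟩

theorem minStat_nonpos : minStat t n l c ≤ 0 :=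
  (List.foldr_min_le_of_mem List.mem_cons_self).trans_eq dstat_one

theorem exists_dstat_eq_minStat (hc : c ≠ []) :
    ∃ p, 1 ≤ p ∧ p ≤ c.length ∧ dstat t n l c p = minStat t n l c := by
  have hlen : 0 < c.length := List.length_pos_iff.mpr hc
  rcases List.mem_cons.mp (List.foldr_min_mem (dstat t n l c 1)
    ((List.range c.length).map fun j => dstat t n l c (j + 1))) with h | h
  · exact ⟨1, le_rfl, hlen, h.symm⟩
  · obtain ⟨j, hj, hjd⟩ := List.mem_map.mp h
    exact ⟨j + 1, by omega, List.mem_range.mp hj, hjd⟩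

theorem epos_spec (hc : c ≠ []) :
    1 ≤ epos t n l c ∧ epos t n l c ≤ c.length ∧ dstat t n l c (epos t n l c) = minStat t n l c :=
  Nat.sInf_mem (exists_dstat_eq_minStat hc)

theorem minStat_lt_dstat_of_lt_epos {p : ℕ} (hp1 : 1 ≤ p) (hp : p < epos t n l c)
    (hc : c ≠ []) : minStat t n l c < dstat t n l c p := by
  have hnot := Nat.notMem_of_lt_sInf hp
  have hle := minStat_le_dstat (t := t) (n := n) (l := l) hp1 (hp.le.trans (epos_spec hc).2.1)
  exact lt_of_le_of_ne hle fun h => hnot ⟨hp1, hp.le.trans (epos_spec hc).2.1, h.symm⟩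

theorem epos_eq_one_of_minStat_eq_zero (hc : c ≠ []) (h0 : minStat t n l c = 0) :
    epos t n l c = 1 :=
  le_antisymm (Nat.sInf_le ⟨le_rfl, List.length_pos_iff.mpr hc, by rw [dstat_one, h0]⟩)
    (epos_spec hc).1

theorem sigmaStat_le_succ (j : ℕ) : sigmaStat t n l c j ≤ sigmaStat t n l c (j + 1) := by
  have hsub := List.take_sublist_take_left (l := c) (show j - 1 ≤ j + 1 - 1 by omega)
  exact Nat.add_le_add hsub.countP_le hsub.countP_le

theorem condC_or_condD_of_tauStat_lt {j : ℕ} {y : ℤ × List (ℤ × ℤ)} (hj : 1 ≤ j)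
    (hy : (c)[j]? = some y) (hlt : tauStat t n l c j < tauStat t n l c (j + 1)) :
    condC t n y.1 l y.2 ∨ condD t n y.1 l y.2 := by
  have hdrop : (c.take (j + 1)).drop 1 = (c.take j).drop 1 ++ [y] := by
    have hjlen : j < c.length := (List.getElem?_eq_some_iff.mp hy).1
    rw [List.take_add_one, hy, Option.toList_some, List.drop_append_of_le_length]
    rw [List.length_take]; omega
  simp only [tauStat, hdrop, List.countP_append, List.countP_singleton] at hlt
  by_contra hno
  have hD' : ¬ condD' t n y.1 l y.2 := fun hD' =>
    hno <| Or.inr ⟨hD'.1, hD'.2.1, hD'.2.2.1, fun h => Or.inl (hD'.2.2.2.1 h).1,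
      fun h => Or.inl (hD'.2.2.2.2.1 h).1,
      fun h => (hD'.2.2.2.2.2 h).imp fun p hp => ⟨hp.1, Or.inl hp.2.1⟩⟩
  simp [hno, hD'] at hlt

theorem rho_ne_none {i : ℤ} {L : List (ℤ × ℤ)} (h : condC t n i l L ∨ condD t n i l L) :
    rho t n i l L ≠ none := by
  unfold rho
  split_ifs <;> simp_all

theorem etil_ne_none_of_getElem? {y : ℤ × List (ℤ × ℤ)} (hy : (c)[epos t n l c - 1]? = some y)
    (h : condC t n y.1 l y.2 ∨ condD t n y.1 l y.2) : etil t n l c ≠ none := by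
  simpa [etil, hy] using rho_ne_none h

/-- The first position attaining a negative minimum lies strictly below its predecessor, and
`σ` is monotone, so `τ` jumps there: the component at that position admits `ρ_l`. -/
theorem etil_ne_none_of_minStat_neg (hneg : minStat t n l c < 0) : etil t n l c ≠ none := by
  have hc : c ≠ [] := by rintro rfl; simp [minStat, dstat_one] at hneg
  obtain ⟨he1, helen, hemin⟩ := epos_spec (t := t) (n := n) (l := l) hc
  set e := epos t n l c
  have he2 : 2 ≤ e := by
    by_contra! h
    rw [show e = 1 by omega, dstat_one] at hemin
    omega
  have hpred := minStat_lt_dstat_of_lt_epos (t := t) (n := n) (l := l) (p := e - 1)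
    (by omega) (by omega) hc
  obtain ⟨y, hy⟩ : ∃ y, (c)[e - 1]? = some y := ⟨_, List.getElem?_eq_getElem (by omega)⟩
  refine etil_ne_none_of_getElem? hy (condC_or_condD_of_tauStat_lt (j := e - 1) (by omega) hy ?_)
  have hsig := sigmaStat_le_succ (t := t) (n := n) (l := l) (c := c) (e - 1)
  rw [Nat.sub_add_cancel (by omega)] at hsig ⊢
  unfold dstat at hpred hemin
  omega

theorem etil_cons_ne_none {x : ℤ × List (ℤ × ℤ)} {c : RSeq}
    (h : condC t n x.1 l x.2 ∨ condD t n x.1 l x.2) : etil t n l (x :: c) ≠ none := by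
  rcases minStat_nonpos.lt_or_eq with hneg | h0
  · exact etil_ne_none_of_minStat_neg hneg
  · refine etil_ne_none_of_getElem? ?_ h
    rw [epos_eq_one_of_minStat_eq_zero (List.cons_ne_nil _ _) h0]
    rfl

theorem sigmaStat_eq_zero_of_empty {s : RSeq} (hs : ∀ y ∈ s, y.2 = [] ∧ y.1 < l) :
    sigmaStat t n l (s ++ c) (s.length + 1) = 0 := by
  have hA : ∀ y ∈ s, ¬ (condA t n y.1 l y.2 ∨ condB t n y.1 l y.2) := by
    rintro y hy (hA | hB)
    · simpa [(hs y hy).1, seconds] using hA.2.2.2.1 (hs y hy).2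
    · simpa [(hs y hy).1, seconds] using hB.2.2.1
  have hA' : ∀ y ∈ s, ¬ condA' t n y.1 l y.2 := fun y hy hA' => by
    simpa [(hs y hy).1, seconds] using hA'.2.2.2.2.2.1
  simp only [sigmaStat, Nat.add_sub_cancel, List.take_left, Nat.add_eq_zero_iff,
    List.countP_eq_zero, decide_eq_true_eq]
  exact ⟨hA, hA'⟩

theorem minStat_neg_of_empty_prefix {s : RSeq} {x : ℤ × List (ℤ × ℤ)} (hs : s ≠ [])
    (hempty : ∀ y ∈ s, y.2 = [] ∧ y.1 < l) (h : condC t n x.1 l x.2 ∨ condD t n x.1 l x.2) :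
    minStat t n l (s ++ x :: c) < 0 := by
  have hslen : 1 ≤ s.length := List.length_pos_iff.mpr hs
  have hτ : 0 < tauStat t n l (s ++ x :: c) (s.length + 1) := by
    have hx : x ∈ ((s ++ x :: c).take (s.length + 1)).drop 1 := by
      rw [List.take_append, List.take_of_length_le (by omega), List.drop_append_of_le_length hslen]
      simp
    exact Nat.add_pos_left (List.countP_pos_iff.mpr ⟨x, hx, by simpa using h⟩) _
  have hle := minStat_le_dstat (t := t) (n := n) (l := l) (c := s ++ x :: c)
    (p := s.length + 1) (by omega) (by simp)
  rw [dstat, sigmaStat_eq_zero_of_empty hempty] at hle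
  omega

end Statistics

theorem typeList_pairwise_le (n : ℕ) (m : ℤ → ℕ) : (typeList n m).Pairwise (· ≤ ·) := by
  refine List.pairwise_flatMap.mpr ⟨fun _ _ => List.pairwise_replicate.mpr (Or.inr le_rfl), ?_⟩
  have hrange : ((List.range n).map ((↑) : ℕ → ℤ)).Pairwise (· < ·) :=
    List.pairwise_map.mpr (List.pairwise_lt_range.imp Int.ofNat_lt.mpr)
  simp only [List.map_eq_flatMap] at hrange
  refine hrange.imp fun {a b} hab => ?_
  intro x hx y hy
  rw [(List.mem_replicate.mp hx).2, (List.mem_replicate.mp hy).2]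
  omega

theorem eq_rlam_of_forall_empty {n : ℕ} {m : ℤ → ℕ} {c : RSeq}
    (hmap : c.map Prod.fst = typeList n m) (h : ∀ q ∈ c, q.2 = []) : c = rlam n m := by
  rw [rlam, ← hmap, List.map_map]
  nth_rewrite 1 [← List.map_id c]
  exact List.map_congr_left fun q hq => Prod.ext rfl (by simp [h q hq])

/-- Condition (2) bounds the superscript of the last empty component before `x`; the
superscripts of `r_λ` increase along the sequence. -/
theorem fst_lt_of_mem_empty_prefix {n : ℕ} {m : ℤ → ℕ} {l : ℤ} {s c : RSeq}
    {x : ℤ × List (ℤ × ℤ)} (hmap : (s ++ x :: c).map Prod.fst = typeList n m)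
    (hchain : (s ++ x :: c).IsChain fun a b => pairOkC n a.1 a.2 b.1 b.2)
    (hs : ∀ y ∈ s, y.2 = []) (hx : x.2 ≠ []) (hl : ∀ p ∈ x.2, p.1 ≤ l) :
    ∀ y ∈ s, y.1 < l := by
  rcases List.eq_nil_or_concat s with rfl | ⟨s, w, rfl⟩
  · simp
  rw [List.concat_eq_append] at *
  have hwl : w.1 < l := by
    have hpair : pairOkC n w.1 w.2 x.1 x.2 :=
      (List.isChain_append.mp hchain).2.2 w List.getLast?_concat x rfl
    exact (hpair.1.2 (hs w (by simp)) _ (List.getLast?_eq_some_getLast hx)).trans_le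
      (hl _ (List.getLast_mem hx))
  have hsorted := List.pairwise_append.mp (List.pairwise_append.mp
    (List.pairwise_map.mp (hmap ▸ typeList_pairwise_le n m))).1
  intro y hy
  rcases List.mem_append.mp hy with hy | hy
  · exact (hsorted.2.2 y hy w (by simp)).trans_lt hwl
  · exact List.mem_singleton.mp hy ▸ hwl

end CrystalSeq

open CrystalSeq in
theorem statement19_general (n : ℕ) (m : ℤ → ℕ) (c : RSeq)
    (h : MemC n m c)
    (hw : ∀ l : ℤ, 1 ≤ l → l ≤ (n : ℤ) → etil true n l c = none) :
    c = rlam n m := by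
  obtain ⟨hmap, hval, hchain⟩ := h
  by_contra hne
  obtain ⟨s, x, c', rfl, hs, hx⟩ := List.exists_append_cons_of_not_forall
    (mt (eq_rlam_of_forall_empty hmap) hne)
  obtain ⟨-, hxn, hxR⟩ := hval x (by simp)
  obtain ⟨l, hl1, hln, hlmax, hCD⟩ := exists_condC_or_condD hxn hxR hx
  refine absurd (hw l hl1 hln) ?_
  obtain rfl | hsne := eq_or_ne s []
  · exact etil_cons_ne_none hCD
  have hsl := fst_lt_of_mem_empty_prefix hmap hchain hs hx hlmax
  exact etil_ne_none_of_minStat_neg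
    (minStat_neg_of_empty_prefix hsne (fun y hy => ⟨hs y hy, hsl y hy⟩) hCD)

open CrystalSeq in
/-- uniqueness of the highest weight element in type `C`: if
`x = (x₁, …, x_k, 0, …) ∈ 𝓡(λ)` (characterised by conditions (1)–(4) of
Theorem `char2`) satisfies `ẽ_l x = 0` for all `l ∈ I`, then `x = r_λ`. -/
theorem statement19 (n : ℕ) (hn : 1 ≤ n) (m : ℤ → ℕ) (c : RSeq)
    (h : MemC n m c)
    (hw : ∀ l : ℤ, 1 ≤ l → l ≤ (n : ℤ) → etil true n l c = none) :
    c = rlam n m :=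
  statement19_general n m c h hw
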